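/- arXiv:2501.06696 — 15 statements merged into one kernel-verified Lean document; each statement's English description precedes it below -/
import Mathlib

section
/- Let R be a commutative ring with identity and M an R-module. Then M is weakly nil-M-finitely generated (i.e., there exist r ∈ √Ann_R(M) and x_1,…,x_t ∈ M with M + rM = Rx_1 + ⋯ + Rx_t + rM) if and only if M is a finitely generated R-module. -/
open Pointwise

/-- `M` is weakly nil-`M`-finitely generated iff `M` is finitely generated. -/
theorem weakly_nil_fg_iff_fg {R M : Type*} [CommRing R] [AddCommGroup M] [Module R M] :
    (∃ r : R, (∃ n : ℕ, 0 < n ∧ ∀ m : M, r ^ n • m = 0) ∧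
      ∃ s : Finset M, (⊤ : Submodule R M) ⊔ r • (⊤ : Submodule R M) =
        Submodule.span R (↑s : Set M) ⊔ r • (⊤ : Submodule R M)) ↔
    (⊤ : Submodule R M).FG := by
  constructor
  · rintro ⟨r, ⟨n, -, hr⟩, s, hs⟩
    rw [sup_eq_left.mpr le_top] at hs
    -- hs : ⊤ = span s ⊔ r • ⊤
    have key : ∀ k : ℕ, (⊤ : Submodule R M) ≤
        Submodule.span R (↑s : Set M) ⊔ r ^ k • (⊤ : Submodule R M) := by
      intro k
      induction k with
      | zero => simp
      | succ k ih =>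
        refine ih.trans (sup_le le_sup_left ?_)
        have : r ^ k • (⊤ : Submodule R M) =
            r ^ k • Submodule.span R (↑s : Set M) ⊔ r ^ k • (r • (⊤ : Submodule R M)) := by
          conv_lhs => rw [hs]
          exact Submodule.smul_sup' _ _ _
        rw [this]
        apply sup_le
        · exact le_sup_of_le_left (Submodule.smul_le_self_of_tower _ _)
        · rw [smul_smul, ← pow_succ]
          exact le_sup_right
    have hn : r ^ n • (⊤ : Submodule R M) = ⊥ := by
      rw [eq_bot_iff]
      rintro y ⟨x, -, rfl⟩
      simp [hr x]
    have := key n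
    rw [hn, sup_bot_eq] at this
    exact ⟨s, le_antisymm le_top this⟩
  · rintro ⟨s, hs⟩
    exact ⟨0, ⟨1, one_pos, fun m => by simp⟩, s, by rw [hs]⟩
end

section
/- Let R be a commutative ring with identity and M an R-module. Then M is a weakly nil-M-finitely cogenerated module (i.e., there exists r ∈ √Ann_R(M) such that for every family {N_i}_{i∈I} of submodules with ⋂_{i∈I} N_i = 0, there is a finite subset J ⊆ I with (⋂_{i∈J} N_i) ∩ (0 :_M r) = 0) if and only if M is finitely cogenerated (i.e., whenever a family of submodules has intersection 0, some finite subfamily has intersection 0). -/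
open Pointwise

universe u

/-- `M` is weakly nil-`M`-finitely cogenerated iff `M` is finitely cogenerated. -/
theorem weakly_nil_fcog_iff_fcog {R M : Type*} [CommRing R] [AddCommGroup M] [Module R M] :
    (∃ r : R, (∃ n : ℕ, 0 < n ∧ ∀ m : M, r ^ n • m = 0) ∧
      ∀ (ι : Type u) (N : ι → Submodule R M), (⨅ i, N i) = ⊥ →
        ∃ J : Finset ι, (⨅ i ∈ J, N i) ⊓ Submodule.torsionBy R M r = ⊥) ↔
    (∀ (ι : Type u) (N : ι → Submodule R M), (⨅ i, N i) = ⊥ →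
      ∃ J : Finset ι, (⨅ i ∈ J, N i) = ⊥) := by
  constructor
  · rintro ⟨r, ⟨n, hn, hr⟩, h⟩ ι N hN
    obtain ⟨J, hJ⟩ := h ι N hN
    refine ⟨J, ?_⟩
    classical
    rw [eq_bot_iff]
    intro x hx
    simp only [Submodule.mem_bot]
    have hex : ∃ k : ℕ, r ^ k • x = 0 := ⟨n, hr x⟩
    set k := Nat.find hex with hkdef
    have hk : r ^ k • x = 0 := Nat.find_spec hex
    by_contra hx0
    rcases Nat.eq_zero_or_pos k with h0 | hpos
    · rw [h0, pow_zero, one_smul] at hk; exact hx0 hk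
    · have hlt : k - 1 < k := Nat.sub_lt hpos one_pos
      have hne : r ^ (k - 1) • x ≠ 0 := Nat.find_min hex hlt
      have hmem : r ^ (k - 1) • x ∈ (⨅ i ∈ J, N i) ⊓ Submodule.torsionBy R M r := by
        refine Submodule.mem_inf.mpr ⟨?_, ?_⟩
        · exact Submodule.smul_mem _ _ hx
        · rw [Submodule.mem_torsionBy_iff, smul_smul, ← pow_succ']
          rw [Nat.sub_add_cancel hpos]
          exact hk
      rw [hJ, Submodule.mem_bot] at hmem
      exact hne hmem
  · intro h
    refine ⟨0, ⟨1, one_pos, by simp⟩, fun ι N hN => ?_⟩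
    obtain ⟨J, hJ⟩ := h ι N hN
    exact ⟨J, by rw [hJ, bot_inf_eq]⟩
end

section
/- Let R be a commutative ring with identity and M an R-module. If every submodule of M is nil-M-finitely generated, then M is a nil-M-Noetherian module. -/
open Pointwise

/-- Pointwise smul of a f.g. submodule is f.g. -/
theorem nilfg_aux_smul_fg {R M : Type*} [CommRing R] [AddCommGroup M] [Module R M]
    (a : R) {S : Submodule R M} (hS : S.FG) : (a • S).FG := by
  have : a • S = S.map (DistribMulAction.toLinearMap R M a) := rfl
  rw [this]
  exact hS.map _

/-- If every submodule of `M` is nil-`M`-finitely generated, then `M` is nil-`M`-Noetherian. -/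
theorem nil_noetherian_of_forall_nil_fg {R M : Type*} [CommRing R] [AddCommGroup M] [Module R M]
    (h : ∀ N : Submodule R M, ∃ r : R, (∃ n : ℕ, 0 < n ∧ ∀ m : M, r ^ n • m = 0) ∧
      ∃ s : Finset M, N = Submodule.span R (↑s : Set M) ⊔ r • (⊤ : Submodule R M)) :
    ∃ r : R, (∃ n : ℕ, 0 < n ∧ ∀ m : M, r ^ n • m = 0) ∧
      ∀ N : ℕ → Submodule R M, Monotone N →
        ∃ t : ℕ, ∀ i : ℕ, N (t + i) ≤ N t ⊔ r • (⊤ : Submodule R M) := by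
  obtain ⟨r, hr, _⟩ := h ⊥
  refine ⟨r, hr, ?_⟩
  -- Step 1: M is finitely generated.
  obtain ⟨r₀, ⟨n, hn, hr₀⟩, s₀, hs₀⟩ := h ⊤
  have key : ∀ k : ℕ, ∃ F : Submodule R M, F.FG ∧ (⊤ : Submodule R M) = F ⊔ (r₀ ^ k) • ⊤ := by
    intro k
    induction k with
    | zero =>
      refine ⟨⊥, Submodule.fg_bot, ?_⟩
      rw [pow_zero, one_smul, bot_sup_eq]
    | succ k ih =>
      obtain ⟨F, hF, hFeq⟩ := ih
      refine ⟨F ⊔ (r₀ ^ k) • Submodule.span R (↑s₀ : Set M),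
        hF.sup (nilfg_aux_smul_fg _ (Submodule.fg_span (Finset.finite_toSet s₀))), ?_⟩
      have : (r₀ ^ k) • (⊤ : Submodule R M)
          = (r₀ ^ k) • Submodule.span R (↑s₀ : Set M) ⊔ (r₀ ^ (k + 1)) • ⊤ := by
        conv_lhs => rw [hs₀]
        rw [Submodule.smul_sup', smul_smul, ← pow_succ]
      calc (⊤ : Submodule R M) = F ⊔ (r₀ ^ k) • ⊤ := hFeq
        _ = F ⊔ ((r₀ ^ k) • Submodule.span R (↑s₀ : Set M) ⊔ (r₀ ^ (k + 1)) • ⊤) := by rw [this]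
        _ = F ⊔ (r₀ ^ k) • Submodule.span R (↑s₀ : Set M) ⊔ (r₀ ^ (k + 1)) • ⊤ :=
            (sup_assoc _ _ _).symm
  obtain ⟨F, hF, hFeq⟩ := key n
  have htopfg : (⊤ : Submodule R M).FG := by
    have hzero : (r₀ ^ n) • (⊤ : Submodule R M) = ⊥ := by
      rw [eq_bot_iff]
      rintro x ⟨y, -, rfl⟩
      exact hr₀ y
    rw [hFeq, hzero, sup_bot_eq]
    exact hF
  -- Step 2: every submodule is finitely generated, so M is Noetherian.
  have hNoeth : IsNoetherian R M := by
    rw [isNoetherian_def]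
    intro N
    obtain ⟨r', -, s', hs'⟩ := h N
    rw [hs']
    exact (Submodule.fg_span (Finset.finite_toSet s')).sup (nilfg_aux_smul_fg _ htopfg)
  -- Step 3: monotone chains of submodules stabilize.
  intro N hN
  obtain ⟨t, ht⟩ := monotone_stabilizes_iff_noetherian.mpr hNoeth ⟨N, hN⟩
  refine ⟨t, fun i => ?_⟩
  have := ht (t + i) (Nat.le_add_right t i)
  exact le_trans (le_of_eq this.symm) le_sup_left
end

section
/- Let R be a commutative ring with identity and M an R-module. If M is a nil-M-Noetherian module, then there exists r ∈ √Ann_R(M) such that every non-empty collection Σ of submodules of M, each of the form K + rM for some submodule K, has a maximal element (with respect to inclusion) of the form N + rM. -/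
open Pointwise

/-- If `M` is nil-`M`-Noetherian, then there is `r ∈ √Ann M` such that every non-empty
collection of submodules of `M` of the form `K + rM` has a maximal element `N + rM`. -/
theorem nil_noetherian_max {R M : Type*} [CommRing R] [AddCommGroup M] [Module R M]
    (h : ∃ r : R, (∃ n : ℕ, 0 < n ∧ ∀ m : M, r ^ n • m = 0) ∧
      ∀ N : ℕ → Submodule R M, Monotone N →
        ∃ t : ℕ, ∀ i : ℕ, N (t + i) ≤ N t ⊔ r • (⊤ : Submodule R M)) :
    ∃ r : R, (∃ n : ℕ, 0 < n ∧ ∀ m : M, r ^ n • m = 0) ∧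
      ∀ S : Set (Submodule R M), S.Nonempty →
        (∀ X ∈ S, ∃ K : Submodule R M, X = K ⊔ r • (⊤ : Submodule R M)) →
        ∃ X ∈ S, (∃ N : Submodule R M, X = N ⊔ r • (⊤ : Submodule R M)) ∧
          ∀ Y ∈ S, X ≤ Y → Y = X := by
  obtain ⟨r, hr, hchain⟩ := h
  refine ⟨r, hr, ?_⟩
  rintro S ⟨X0, hX0⟩ hform
  by_contra hcon
  push_neg at hcon
  have step : ∀ X ∈ S, ∃ Y ∈ S, X < Y := by
    intro X hX
    obtain ⟨Y, hYS, hXY, hne⟩ := hcon X hX (hform X hX)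
    exact ⟨Y, hYS, lt_of_le_of_ne hXY (Ne.symm hne)⟩
  choose f hfS hflt using step
  let g : ℕ → {X : Submodule R M // X ∈ S} :=
    fun n => Nat.rec ⟨X0, hX0⟩ (fun _ p => ⟨f p.1 p.2, hfS p.1 p.2⟩) n
  have hglt : ∀ n, (g n).1 < (g (n + 1)).1 := fun n => hflt _ _
  have hmono : Monotone (fun n => (g n).1) :=
    monotone_nat_of_le_succ fun n => (hglt n).le
  obtain ⟨t, ht⟩ := hchain _ hmono
  have hsub : r • (⊤ : Submodule R M) ≤ (g t).1 := by
    obtain ⟨K, hK⟩ := hform _ (g t).2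
    rw [hK]; exact le_sup_right
  have h1 : (g (t + 1)).1 ≤ (g t).1 := (ht 1).trans (sup_le le_rfl hsub)
  exact absurd h1 (hglt t).not_ge
end

section
/- Let R be a commutative ring with identity and M an R-module. Suppose there exists r ∈ √Ann_R(M) such that every non-empty collection of submodules of M of the form K + rM has a maximal element with respect to inclusion. Then every submodule of M is weakly nil-M-finitely generated. -/
open Pointwise

/-- If there is `r ∈ √Ann M` such that every non-empty collection of submodules of `M` of the
form `K + rM` has a maximal element, then every submodule of `M` is weakly
nil-`M`-finitely generated. -/
theorem weakly_nil_fg_of_max {R M : Type*} [CommRing R] [AddCommGroup M] [Module R M]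
    (h : ∃ r : R, (∃ n : ℕ, 0 < n ∧ ∀ m : M, r ^ n • m = 0) ∧
      ∀ S : Set (Submodule R M), S.Nonempty →
        (∀ X ∈ S, ∃ K : Submodule R M, X = K ⊔ r • (⊤ : Submodule R M)) →
        ∃ X ∈ S, ∀ Y ∈ S, X ≤ Y → Y = X) :
    ∀ N : Submodule R M, ∃ r : R, (∃ n : ℕ, 0 < n ∧ ∀ m : M, r ^ n • m = 0) ∧
      ∃ s : Finset M, N ⊔ r • (⊤ : Submodule R M) =
        Submodule.span R (↑s : Set M) ⊔ r • (⊤ : Submodule R M) := by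
  classical
  obtain ⟨r, hr, hmax⟩ := h
  intro N
  refine ⟨r, hr, ?_⟩
  set S : Set (Submodule R M) :=
    { X | ∃ s : Finset M, (↑s : Set M) ⊆ (N : Set M) ∧
        X = Submodule.span R (↑s : Set M) ⊔ r • (⊤ : Submodule R M) } with hS
  have hne : S.Nonempty := ⟨Submodule.span R (↑(∅ : Finset M) : Set M) ⊔ r • ⊤,
    ⟨∅, by simp, rfl⟩⟩
  have hform : ∀ X ∈ S, ∃ K : Submodule R M, X = K ⊔ r • (⊤ : Submodule R M) := by
    rintro X ⟨s, -, rfl⟩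
    exact ⟨_, rfl⟩
  obtain ⟨X, ⟨s, hsN, rfl⟩, hXmax⟩ := hmax S hne hform
  refine ⟨s, ?_⟩
  have hle : N ≤ Submodule.span R (↑s : Set M) ⊔ r • (⊤ : Submodule R M) := by
    intro n hn
    have hmem : (Submodule.span R (↑(insert n s) : Set M) ⊔ r • (⊤ : Submodule R M)) ∈ S := by
      refine ⟨insert n s, ?_, rfl⟩
      intro x hx
      rcases Finset.mem_insert.mp (by exact_mod_cast hx) with h | h
      · subst h; exact hn
      · exact hsN h
    have hle' : Submodule.span R (↑s : Set M) ⊔ r • (⊤ : Submodule R M) ≤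
        Submodule.span R (↑(insert n s) : Set M) ⊔ r • (⊤ : Submodule R M) := by
      exact sup_le_sup_right
        (Submodule.span_mono (Finset.coe_subset.mpr (Finset.subset_insert n s))) _
    have heq := hXmax _ hmem hle'
    rw [← heq]
    exact le_sup_left (α := Submodule R M) (Submodule.subset_span (by simp))
  refine le_antisymm (sup_le hle le_sup_right) ?_
  exact sup_le_sup_right (Submodule.span_le.mpr hsN) _
end

section
/- Let R be a commutative ring with identity, M a nil-M-Noetherian R-module, and N a pure submodule of M (i.e., rM ∩ N = rN for each r ∈ R). Then N is a nil-N-Noetherian R-module: there exists r ∈ √Ann_R(N) such that for every ascending chain K_1 ⊆ K_2 ⊆ … of submodules of N there is a positive integer s with K_{s+i} ⊆ K_s + rN for all i ≥ 0. -/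
open Pointwise

/-- A pure submodule of a nil-`M`-Noetherian module is nil-`N`-Noetherian. -/
theorem pure_submodule_nil_noetherian {R M : Type*} [CommRing R] [AddCommGroup M] [Module R M]
    (hM : ∃ r : R, (∃ n : ℕ, 0 < n ∧ ∀ m : M, r ^ n • m = 0) ∧
      ∀ C : ℕ → Submodule R M, Monotone C →
        ∃ t : ℕ, ∀ i : ℕ, C (t + i) ≤ C t ⊔ r • (⊤ : Submodule R M))
    (N : Submodule R M)
    (hpure : ∀ r : R, r • (⊤ : Submodule R M) ⊓ N = r • N) :
    ∃ r : R, (∃ n : ℕ, 0 < n ∧ ∀ m : N, r ^ n • m = 0) ∧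
      ∀ K : ℕ → Submodule R N, Monotone K →
        ∃ s : ℕ, ∀ i : ℕ, K (s + i) ≤ K s ⊔ r • (⊤ : Submodule R N) := by
  obtain ⟨r, ⟨n, hn, hann⟩, hchain⟩ := hM
  refine ⟨r, ⟨n, hn, fun m => ?_⟩, fun K hK => ?_⟩
  · ext
    simpa using hann (m : M)
  · set C : ℕ → Submodule R M := fun i => (K i).map N.subtype with hC
    have hCmono : Monotone C := fun a b hab => Submodule.map_mono (hK hab)
    obtain ⟨t, ht⟩ := hchain C hCmono
    refine ⟨t, fun i => ?_⟩
    have hinj : Function.Injective N.subtype := Subtype.coe_injective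
    rw [← Submodule.map_le_map_iff_of_injective hinj]
    have h1 : C (t + i) ≤ C t ⊔ r • (⊤ : Submodule R M) := ht i
    have h2 : C (t + i) ≤ N := by
      rw [hC]; simpa using Submodule.map_subtype_le N (K (t + i))
    have h3 : C (t + i) ≤ (C t ⊔ r • (⊤ : Submodule R M)) ⊓ N := le_inf h1 h2
    have h4 : C t ≤ N := by
      rw [hC]; simpa using Submodule.map_subtype_le N (K t)
    have h5 : (C t ⊔ r • (⊤ : Submodule R M)) ⊓ N
        = C t ⊔ (r • (⊤ : Submodule R M) ⊓ N) :=
      sup_inf_assoc_of_le (r • (⊤ : Submodule R M)) h4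
    have h6 : Submodule.map N.subtype (K t ⊔ r • (⊤ : Submodule R N))
        = C t ⊔ (r • N) := by
      rw [Submodule.map_sup, Submodule.map_pointwise_smul, Submodule.map_top,
        Submodule.range_subtype]
    rw [h6]
    calc Submodule.map N.subtype (K (t + i)) = C (t + i) := rfl
      _ ≤ C t ⊔ (r • (⊤ : Submodule R M) ⊓ N) := h5 ▸ h3
      _ = C t ⊔ r • N := by rw [hpure]
end

section
/- Let R be a commutative ring with identity, M a nil-M-Noetherian R-module, and N a submodule of M. Then the quotient module M/N is a nil-(M/N)-Noetherian R-module: there exists r ∈ √Ann_R(M/N) such that for every ascending chain of submodules of M/N there is a positive integer t beyond which every term of the chain is contained in the t-th term plus r(M/N). -/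
open Pointwise

/-- Any quotient of a nil-`M`-Noetherian module `M` is nil-`(M/N)`-Noetherian. -/
theorem quotient_nil_noetherian {R M : Type*} [CommRing R] [AddCommGroup M] [Module R M]
    (hM : ∃ r : R, (∃ n : ℕ, 0 < n ∧ ∀ m : M, r ^ n • m = 0) ∧
      ∀ C : ℕ → Submodule R M, Monotone C →
        ∃ t : ℕ, ∀ i : ℕ, C (t + i) ≤ C t ⊔ r • (⊤ : Submodule R M))
    (N : Submodule R M) :
    ∃ r : R, (∃ n : ℕ, 0 < n ∧ ∀ x : M ⧸ N, r ^ n • x = 0) ∧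
      ∀ C : ℕ → Submodule R (M ⧸ N), Monotone C →
        ∃ t : ℕ, ∀ i : ℕ, C (t + i) ≤ C t ⊔ r • (⊤ : Submodule R (M ⧸ N)) := by
  obtain ⟨r, ⟨n, hn, hnil⟩, hchain⟩ := hM
  refine ⟨r, ⟨n, hn, ?_⟩, ?_⟩
  · intro x
    obtain ⟨m, rfl⟩ := N.mkQ_surjective x
    rw [← map_smul, hnil, map_zero]
  · intro C hC
    obtain ⟨t, ht⟩ := hchain (fun i => (C i).comap N.mkQ)
      (fun i j hij => Submodule.comap_mono (hC hij))
    refine ⟨t, fun i => ?_⟩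
    have h1 : C (t + i) = ((C (t + i)).comap N.mkQ).map N.mkQ :=
      (Submodule.map_comap_eq_of_surjective N.mkQ_surjective _).symm
    rw [h1]
    calc ((C (t + i)).comap N.mkQ).map N.mkQ
        ≤ (((C t).comap N.mkQ) ⊔ r • (⊤ : Submodule R M)).map N.mkQ :=
          Submodule.map_mono (ht i)
      _ = ((C t).comap N.mkQ).map N.mkQ ⊔ (r • (⊤ : Submodule R M)).map N.mkQ :=
          Submodule.map_sup _ _ _
      _ ≤ C t ⊔ r • (⊤ : Submodule R (M ⧸ N)) := by
          apply sup_le_sup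
          · rw [Submodule.map_comap_eq_of_surjective N.mkQ_surjective]
          · rintro x ⟨y, hy, rfl⟩
            obtain ⟨z, -, rfl⟩ := Set.mem_smul_set.mp hy
            rw [map_smul]
            exact Submodule.smul_mem_pointwise_smul _ _ _ trivial
end

section
/- Let R be a commutative ring with identity and M an R-module. If M is a nil-M-Artinian module, then there exists r ∈ √Ann_R(M) such that every non-empty collection Σ of submodules of M, each of the form K ∩ (0 :_M r) for some submodule K, has a minimal element (with respect to inclusion) of the form N ∩ (0 :_M r). -/
open Pointwise

/-- If `M` is nil-`M`-Artinian, then there is `r ∈ √Ann M` such that every non-empty collection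
of submodules of `M` of the form `K ∩ (0 :_M r)` has a minimal element `N ∩ (0 :_M r)`. -/
theorem nil_artinian_min {R M : Type*} [CommRing R] [AddCommGroup M] [Module R M]
    (h : ∃ r : R, (∃ n : ℕ, 0 < n ∧ ∀ m : M, r ^ n • m = 0) ∧
      ∀ N : ℕ → Submodule R M, Antitone N →
        ∃ t : ℕ, ∀ i : ℕ, N t ⊓ Submodule.torsionBy R M r ≤ N (t + i)) :
    ∃ r : R, (∃ n : ℕ, 0 < n ∧ ∀ m : M, r ^ n • m = 0) ∧
      ∀ S : Set (Submodule R M), S.Nonempty →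
        (∀ X ∈ S, ∃ K : Submodule R M, X = K ⊓ Submodule.torsionBy R M r) →
        ∃ X ∈ S, (∃ N : Submodule R M, X = N ⊓ Submodule.torsionBy R M r) ∧
          ∀ Y ∈ S, Y ≤ X → Y = X := by
  obtain ⟨r, hr, hchain⟩ := h
  refine ⟨r, hr, ?_⟩
  intro S hne hS
  by_contra hcon
  push_neg at hcon
  have key : ∀ X : {X // X ∈ S}, ∃ Y : {X // X ∈ S}, Y.1 < X.1 := by
    rintro ⟨X, hX⟩
    obtain ⟨Y, hY, hle, hne'⟩ := hcon X hX (hS X hX)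
    exact ⟨⟨Y, hY⟩, lt_of_le_of_ne hle hne'⟩
  choose f hf using key
  obtain ⟨X0, hX0⟩ := hne
  set N : ℕ → {X // X ∈ S} := fun n => f^[n] ⟨X0, hX0⟩ with hN
  have hdesc : ∀ n, (N (n+1)).1 < (N n).1 := by
    intro n
    simp only [hN, Function.iterate_succ_apply']
    exact hf _
  have hanti : Antitone (fun n => (N n).1) :=
    antitone_nat_of_succ_le fun n => (hdesc n).le
  obtain ⟨t, ht⟩ := hchain (fun n => (N n).1) hanti
  have hle : (N t).1 ≤ Submodule.torsionBy R M r := by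
    obtain ⟨K, hK⟩ := hS _ (N t).2
    rw [hK]; exact inf_le_right
  have h1 := ht 1
  rw [inf_eq_left.mpr hle] at h1
  exact absurd h1 (not_le_of_gt (hdesc t))
end

section
/- Let R be a commutative ring with identity and M an R-module. If M is a nil-M-Noetherian module, then M is a finitely generated R-module. -/
open Pointwise

/-- A nil-`M`-Noetherian module is finitely generated. -/
theorem fg_of_nil_noetherian {R M : Type*} [CommRing R] [AddCommGroup M] [Module R M]
    (h : ∃ r : R, (∃ n : ℕ, 0 < n ∧ ∀ m : M, r ^ n • m = 0) ∧
      ∀ N : ℕ → Submodule R M, Monotone N →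
        ∃ t : ℕ, ∀ i : ℕ, N (t + i) ≤ N t ⊔ r • (⊤ : Submodule R M)) :
    (⊤ : Submodule R M).FG := by
  classical
  obtain ⟨r, ⟨n, hn, hrn⟩, hchain⟩ := h
  -- membership in pointwise smul
  have hmem : ∀ (a : R) (S : Submodule R M) (x : M),
      x ∈ a • S ↔ ∃ y ∈ S, a • y = x := by
    intro a S x
    constructor
    · rintro hx
      rw [show a • S = Submodule.map (DistribMulAction.toLinearMap R M a) S from rfl] at hx
      obtain ⟨y, hy, hxy⟩ := hx
      exact ⟨y, hy, hxy⟩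
    · rintro ⟨y, hy, rfl⟩
      exact Submodule.smul_mem_pointwise_smul y a S hy
  -- Step 1: there is a f.g. submodule N with ⊤ ≤ N ⊔ r • ⊤.
  have key : ∃ N : Submodule R M, N.FG ∧ (⊤ : Submodule R M) ≤ N ⊔ r • ⊤ := by
    by_contra hcon
    push_neg at hcon
    have hstep : ∀ N : Submodule R M, N.FG → ∃ x : M, x ∉ N ⊔ r • (⊤ : Submodule R M) := by
      intro N hN
      by_contra hx
      push_neg at hx
      exact hcon N hN (fun m _ => hx m)
    choose g hg using hstep
    let f : ℕ → {N : Submodule R M // N.FG} := fun k =>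
      Nat.rec ⟨⊥, Submodule.fg_bot⟩
        (fun _ p => ⟨p.1 ⊔ Submodule.span R {g p.1 p.2},
          p.2.sup (Submodule.fg_span_singleton _)⟩) k
    have hmono : Monotone (fun k => (f k).1) :=
      monotone_nat_of_le_succ (fun k => le_sup_left)
    obtain ⟨t, ht⟩ := hchain (fun k => (f k).1) hmono
    have h1 : g (f t).1 (f t).2 ∈ (f (t + 1)).1 :=
      Submodule.mem_sup_right (Submodule.mem_span_singleton_self _)
    exact hg (f t).1 (f t).2 (ht 1 h1)
  obtain ⟨N, hNfg, hNle⟩ := key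
  -- Step 2: by induction, ⊤ ≤ N ⊔ r ^ (k+1) • ⊤ for all k.
  have hrN : ∀ (a : R), a • N ≤ N := by
    intro a x hx
    rw [hmem] at hx
    obtain ⟨y, hy, rfl⟩ := hx
    exact N.smul_mem a hy
  have hk : ∀ k : ℕ, (⊤ : Submodule R M) ≤ N ⊔ (r ^ (k + 1)) • ⊤ := by
    intro k
    induction k with
    | zero => simpa using hNle
    | succ k ih =>
      have h2 : r • (⊤ : Submodule R M) ≤ N ⊔ (r ^ (k + 2)) • ⊤ := by
        calc r • (⊤ : Submodule R M) ≤ r • (N ⊔ (r ^ (k + 1)) • ⊤) :=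
              smul_mono_right r ih
          _ = r • N ⊔ r • ((r ^ (k + 1)) • ⊤) := Submodule.smul_sup' r _ _
          _ ≤ N ⊔ (r ^ (k + 2)) • ⊤ := by
              apply sup_le_sup (hrN r)
              rw [smul_smul, ← pow_succ']
      calc (⊤ : Submodule R M) ≤ N ⊔ r • ⊤ := hNle
        _ ≤ N ⊔ (N ⊔ (r ^ (k + 2)) • ⊤) := sup_le_sup_left h2 N
        _ = N ⊔ (r ^ (k + 2)) • ⊤ := by rw [← sup_assoc, sup_idem]
  -- Step 3: r ^ n • ⊤ = ⊥, hence ⊤ = N.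
  have hbot : (r ^ n) • (⊤ : Submodule R M) = ⊥ := by
    rw [eq_bot_iff]
    intro x hx
    rw [hmem] at hx
    obtain ⟨y, _, rfl⟩ := hx
    simpa using hrn y
  have htop : (⊤ : Submodule R M) ≤ N := by
    have := hk (n - 1)
    rw [Nat.sub_add_cancel hn, hbot, sup_bot_eq] at this
    exact this
  exact top_le_iff.mp htop ▸ hNfg
end

section
/- Let R be a commutative ring with identity and M an R-module. If M is a nil-M-Artinian module, then M is a finitely cogenerated R-module (i.e., whenever a family of submodules of M has intersection 0, some finite subfamily already has intersection 0). -/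
open Pointwise

universe u

/-- A nil-`M`-Artinian module is finitely cogenerated. -/
theorem fcog_of_nil_artinian {R M : Type*} [CommRing R] [AddCommGroup M] [Module R M]
    (h : ∃ r : R, (∃ n : ℕ, 0 < n ∧ ∀ m : M, r ^ n • m = 0) ∧
      ∀ N : ℕ → Submodule R M, Antitone N →
        ∃ t : ℕ, ∀ i : ℕ, N t ⊓ Submodule.torsionBy R M r ≤ N (t + i)) :
    ∀ (ι : Type u) (N : ι → Submodule R M), (⨅ i, N i) = ⊥ →
      ∃ J : Finset ι, (⨅ i ∈ J, N i) = ⊥ := by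
  obtain ⟨r, ⟨n, hn0, hn⟩, hchain⟩ := h
  intro ι N hinf
  classical
  set T := Submodule.torsionBy R M r with hT
  set S : Set (Submodule R M) := {K | ∃ J : Finset ι, K = (⨅ i ∈ J, N i) ⊓ T} with hS
  -- S has a minimal element
  have hmin : ∃ K ∈ S, ∀ K' ∈ S, K' ≤ K → K' = K := by
    by_contra hc
    push_neg at hc
    have hstep : ∀ K : Submodule R M, K ∈ S → ∃ K', K' ∈ S ∧ K' < K := by
      intro K hK
      obtain ⟨K', hK', hle, hne⟩ := hc K hK
      exact ⟨K', hK', lt_of_le_of_ne hle hne⟩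
    choose! f hfS hflt using hstep
    have hT0 : (⊤ : Submodule R M) ⊓ T ∈ S := ⟨∅, by simp⟩
    set c : ℕ → Submodule R M := fun k => f^[k] (⊤ ⊓ T) with hc'
    have hcS : ∀ k, c k ∈ S := by
      intro k
      induction k with
      | zero => exact hT0
      | succ k ih => simpa [hc', Function.iterate_succ_apply'] using hfS _ ih
    have hclt : ∀ k, c (k + 1) < c k := by
      intro k
      simpa [hc', Function.iterate_succ_apply'] using hflt _ (hcS k)
    have hanti : Antitone c := antitone_nat_of_succ_le fun k => (hclt k).le
    obtain ⟨t, ht⟩ := hchain c hanti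
    have hcT : c t ≤ T := by
      obtain ⟨J, hJ⟩ := hcS t
      rw [hJ]; exact inf_le_right
    have h1 := ht 1
    rw [inf_eq_left.mpr hcT] at h1
    exact absurd h1 (not_le_of_gt (hclt t))
  obtain ⟨K, ⟨J₀, hJ₀⟩, hKmin⟩ := hmin
  refine ⟨J₀, ?_⟩
  have hKbot : K = ⊥ := by
    have hle : ∀ i : ι, K ≤ N i := by
      intro i
      have hmem : ((⨅ j ∈ insert i J₀, N j) ⊓ T) ∈ S := ⟨insert i J₀, rfl⟩
      have heq : (⨅ j ∈ insert i J₀, N j) = N i ⊓ ⨅ j ∈ J₀, N j := by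
        simp [Finset.mem_insert, iInf_or, iInf_inf_eq]
      have hle' : ((⨅ j ∈ insert i J₀, N j) ⊓ T) ≤ K := by
        rw [hJ₀, heq]
        exact inf_le_inf_right T inf_le_right
      have := hKmin _ hmem hle'
      calc K = (⨅ j ∈ insert i J₀, N j) ⊓ T := this.symm
        _ ≤ N i := by rw [heq]; exact le_trans inf_le_left inf_le_left
    have : K ≤ ⨅ i, N i := le_iInf hle
    rw [hinf] at this
    exact le_bot_iff.mp this
  rw [hJ₀] at hKbot
  -- now use that r acts injectively on ⨅ i ∈ J₀, N i and r^n kills M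
  have key : ∀ m : ℕ, ∀ x ∈ (⨅ i ∈ J₀, N i), r ^ m • x = 0 → x = 0 := by
    intro m
    induction m with
    | zero => intro x _ hx; simpa using hx
    | succ m ih =>
        intro x hx hrx
        have hmx : r ^ m • x ∈ (⨅ i ∈ J₀, N i) := Submodule.smul_mem _ _ hx
        have hmT : r ^ m • x ∈ T := by
          rw [hT, Submodule.mem_torsionBy_iff]
          rw [smul_smul, ← pow_succ']
          exact hrx
        have : r ^ m • x ∈ ((⨅ i ∈ J₀, N i) ⊓ T : Submodule R M) := ⟨hmx, hmT⟩
        rw [hKbot] at this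
        exact ih x hx (by simpa using this)
  rw [eq_bot_iff]
  intro x hx
  simpa using key n x hx (hn x)
end

section
/- Let R be a commutative ring with identity, M a nil-M-Artinian R-module, and N a copure submodule of M (i.e., (N :_M I) = N + (0 :_M I) for each ideal I of R). Then the quotient module M/N is a nil-(M/N)-Artinian R-module: there exists r ∈ √Ann_R(M/N) such that for every descending chain of submodules of M/N there is a positive integer t beyond which every term of the chain contains the intersection of the t-th term with (0 :_{M/N} r). -/
open Pointwise

/-- If `M` is nil-`M`-Artinian and `N` is a copure submodule of `M`, then `M/N` is
nil-`(M/N)`-Artinian. -/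
theorem quotient_nil_artinian_of_copure {R M : Type*} [CommRing R] [AddCommGroup M] [Module R M]
    (hM : ∃ r : R, (∃ n : ℕ, 0 < n ∧ ∀ m : M, r ^ n • m = 0) ∧
      ∀ C : ℕ → Submodule R M, Antitone C →
        ∃ t : ℕ, ∀ i : ℕ, C t ⊓ Submodule.torsionBy R M r ≤ C (t + i))
    (N : Submodule R M)
    (hcopure : ∀ I : Ideal R, ∀ m : M,
      (∀ a ∈ I, a • m ∈ N) ↔ m ∈ N ⊔ Submodule.torsionBySet R M (I : Set R)) :
    ∃ r : R, (∃ n : ℕ, 0 < n ∧ ∀ x : M ⧸ N, r ^ n • x = 0) ∧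
      ∀ C : ℕ → Submodule R (M ⧸ N), Antitone C →
        ∃ t : ℕ, ∀ i : ℕ, C t ⊓ Submodule.torsionBy R (M ⧸ N) r ≤ C (t + i) := by
  obtain ⟨r, ⟨n, hn, hkill⟩, hchain⟩ := hM
  refine ⟨r, ⟨n, hn, ?_⟩, ?_⟩
  · intro x
    obtain ⟨m, rfl⟩ := Submodule.Quotient.mk_surjective N x
    rw [← Submodule.Quotient.mk_smul, hkill, Submodule.Quotient.mk_zero]
  · intro C hC
    set D : ℕ → Submodule R M := fun i => (C i).comap N.mkQ with hD
    have hDanti : Antitone D := fun i j hij => Submodule.comap_mono (hC hij)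
    obtain ⟨t, ht⟩ := hchain D hDanti
    refine ⟨t, fun i x hx => ?_⟩
    obtain ⟨hx1, hx2⟩ := hx
    obtain ⟨m, rfl⟩ := Submodule.Quotient.mk_surjective N x
    have hrm : r • m ∈ N := by
      rw [← Submodule.Quotient.mk_eq_zero, Submodule.Quotient.mk_smul]
      exact hx2
    have hmem : m ∈ N ⊔ Submodule.torsionBySet R M ((Ideal.span {r} : Ideal R) : Set R) := by
      rw [← hcopure]
      intro a ha
      obtain ⟨c, rfl⟩ := Ideal.mem_span_singleton'.mp ha
      rw [mul_smul]
      exact N.smul_mem c hrm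
    obtain ⟨nn, hnn, m', hm', hsum⟩ := Submodule.mem_sup.mp hmem
    have hm'tor : m' ∈ Submodule.torsionBy R M r := by
      have := (Submodule.torsionBySet_span_singleton_eq (R := R) (M := M) r) ▸ hm'
      exact this
    have hmk : (Submodule.Quotient.mk m' : M ⧸ N) = Submodule.Quotient.mk m := by
      rw [← hsum, Submodule.Quotient.mk_add, (Submodule.Quotient.mk_eq_zero N).mpr hnn, zero_add]
    have hm'D : m' ∈ D t := by
      show Submodule.Quotient.mk m' ∈ C t
      rw [hmk]; exact hx1
    have : m' ∈ D (t + i) := ht i ⟨hm'D, hm'tor⟩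
    have : (Submodule.Quotient.mk m' : M ⧸ N) ∈ C (t + i) := this
    rwa [hmk] at this
end

section
/- Let R be a commutative ring with identity and M a fully pure R-module (every submodule N of M satisfies rM ∩ N = rN for all r ∈ R). If M is a nil-M-Noetherian module, then M is a Noetherian R-module. -/
open Pointwise

/-- A fully pure nil-`M`-Noetherian module is Noetherian. -/
theorem noetherian_of_fully_pure_nil_noetherian {R M : Type*} [CommRing R] [AddCommGroup M]
    [Module R M]
    (hpure : ∀ (r : R) (N : Submodule R M), r • (⊤ : Submodule R M) ⊓ N = r • N)
    (h : ∃ r : R, (∃ n : ℕ, 0 < n ∧ ∀ m : M, r ^ n • m = 0) ∧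
      ∀ N : ℕ → Submodule R M, Monotone N →
        ∃ t : ℕ, ∀ i : ℕ, N (t + i) ≤ N t ⊔ r • (⊤ : Submodule R M)) :
    IsNoetherian R M := by
  obtain ⟨r, ⟨n, hn, hr⟩, hchain⟩ := h
  -- From purity applied to `N = r • ⊤`, we get `r • ⊤ = r • (r • ⊤)`.
  have step : r • (⊤ : Submodule R M) = r • (r • (⊤ : Submodule R M)) := by
    have := hpure r (r • (⊤ : Submodule R M))
    rwa [inf_idem] at this
  -- Hence `r • ⊤ = r ^ k • ⊤` for all positive `k`.
  have key : ∀ k : ℕ, r • (⊤ : Submodule R M) = r ^ (k + 1) • (⊤ : Submodule R M) := by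
    intro k
    induction k with
    | zero => simp
    | succ k ih =>
      rw [step, ih, smul_smul, ← pow_succ']
  -- But `r ^ n • ⊤ = ⊥` because `r ^ n` annihilates `M`.
  have hbot : r • (⊤ : Submodule R M) = ⊥ := by
    obtain ⟨k, rfl⟩ : ∃ k, n = k + 1 := ⟨n - 1, by omega⟩
    rw [key k]
    rw [eq_bot_iff]
    intro x hx
    obtain ⟨m, -, rfl⟩ := Submodule.mem_map.mp hx
    simpa using hr m
  -- Now every monotone chain stabilizes.
  rw [← monotone_stabilizes_iff_noetherian]
  intro f
  obtain ⟨t, ht⟩ := hchain f f.monotone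
  refine ⟨t, fun m hm => le_antisymm (f.monotone hm) ?_⟩
  have := ht (m - t)
  rw [hbot, sup_bot_eq] at this
  have hmt : t + (m - t) = m := by omega
  rwa [hmt] at this
end

section
/- Let R be a commutative ring with identity and M a fully copure R-module (every submodule N of M satisfies (N :_M I) = N + (0 :_M I) for all ideals I of R). If M is a nil-M-Artinian module, then M is an Artinian R-module. -/
open Pointwise

/-- A fully copure nil-`M`-Artinian module is Artinian. -/
theorem artinian_of_fully_copure_nil_artinian {R M : Type*} [CommRing R] [AddCommGroup M]
    [Module R M]
    (hcopure : ∀ (N : Submodule R M) (I : Ideal R), ∀ m : M,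
      (∀ a ∈ I, a • m ∈ N) ↔ m ∈ N ⊔ Submodule.torsionBySet R M (I : Set R))
    (h : ∃ r : R, (∃ n : ℕ, 0 < n ∧ ∀ m : M, r ^ n • m = 0) ∧
      ∀ N : ℕ → Submodule R M, Antitone N →
        ∃ t : ℕ, ∀ i : ℕ, N t ⊓ Submodule.torsionBy R M r ≤ N (t + i)) :
    IsArtinian R M := by
  obtain ⟨r, ⟨n, hn, hrn⟩, hchain⟩ := h
  -- key induction: for all k, every antitone chain is eventually above torsion by r^k
  have key : ∀ k (N : ℕ → Submodule R M), Antitone N →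
      ∃ t : ℕ, ∀ i : ℕ, N t ⊓ Submodule.torsionBy R M (r ^ k) ≤ N (t + i) := by
    intro k
    induction k with
    | zero =>
      intro N _
      refine ⟨0, fun i x hx => ?_⟩
      have hx2 : (r ^ 0) • x = 0 := hx.2
      rw [pow_zero, one_smul] at hx2
      rw [hx2]
      exact (N (0 + i)).zero_mem
    | succ k ih =>
      intro N hN
      obtain ⟨t1, ht1⟩ := hchain N hN
      obtain ⟨tk, htk⟩ := ih N hN
      set T := max t1 tk with hT
      refine ⟨T, fun i m hm => ?_⟩
      obtain ⟨hmN, hmt⟩ := hm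
      have hmt' : r ^ (k + 1) • m = 0 := hmt
      -- r • m lies in N tk and is r^k-torsion
      have h1 : r • m ∈ N tk := (N tk).smul_mem r (hN (le_max_right t1 tk) hmN)
      have h2 : (r ^ k) • (r • m) = 0 := by
        rw [smul_smul, ← pow_succ]
        exact hmt'
      have hTtk : tk ≤ T := le_max_right t1 tk
      have hTt1 : t1 ≤ T := le_max_left t1 tk
      have hrm : r • m ∈ N (T + i) := by
        have := htk ((T - tk) + i) ⟨h1, h2⟩
        rwa [← Nat.add_assoc, Nat.add_sub_cancel' hTtk] at this
      -- copure with I = span {r}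
      have hc := (hcopure (N (T + i)) (Ideal.span {r}) m).mp ?_
      · obtain ⟨y, hy, z, hz0, hyz⟩ := Submodule.mem_sup.mp hc
        have hz : z ∈ Submodule.torsionBy R M r := by
          rw [Submodule.mem_torsionBy_iff]
          exact (Submodule.mem_torsionBySet_iff _ _).mp hz0
            ⟨r, Ideal.mem_span_singleton_self r⟩
        -- z = m - y ∈ N T
        have hzT : z ∈ N t1 := by
          have : z = m - y := by rw [← hyz]; abel
          rw [this]
          exact (N t1).sub_mem (hN hTt1 hmN)
            (hN (le_trans hTt1 (Nat.le_add_right T i)) hy)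
        have hz' : z ∈ N (T + i) := by
          have := ht1 ((T - t1) + i) ⟨hzT, hz⟩
          rwa [← Nat.add_assoc, Nat.add_sub_cancel' hTt1] at this
        rw [← hyz]
        exact (N (T + i)).add_mem hy hz'
      · intro a ha
        obtain ⟨c, rfl⟩ := Ideal.mem_span_singleton'.mp ha
        rw [mul_smul]
        exact (N (T + i)).smul_mem c hrm
  -- conclude
  rw [← monotone_stabilizes_iff_artinian]
  intro f
  have hanti : Antitone (fun i => (OrderDual.ofDual (f i) : Submodule R M)) := by
    intro a b hab
    exact f.monotone hab
  obtain ⟨t, ht⟩ := key n (fun i => OrderDual.ofDual (f i)) hanti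
  refine ⟨t, fun m hm => ?_⟩
  have htop : ∀ x : M, x ∈ Submodule.torsionBy R M (r ^ n) := fun x => hrn x
  have hle : (OrderDual.ofDual (f t) : Submodule R M) ≤ OrderDual.ofDual (f m) := by
    have := ht (m - t)
    rw [Nat.add_sub_cancel' hm] at this
    intro x hx
    exact this ⟨hx, htop x⟩
  have hge : (OrderDual.ofDual (f m) : Submodule R M) ≤ OrderDual.ofDual (f t) :=
    hanti hm
  exact show (OrderDual.ofDual (f t) : Submodule R M) = OrderDual.ofDual (f m) from
    le_antisymm hle hge
end

section
/- Let R be a commutative ring with identity that is a nil-R-Noetherian ring, and let M be a multiplication R-module (i.e., N = (N :_R M)M for every submodule N of M). Then M is a nil-M-Noetherian module. -/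
open Pointwise

/-- If `R` is a nil-`R`-Noetherian ring and `M` is a multiplication `R`-module, then `M` is a
nil-`M`-Noetherian module. -/
theorem nil_noetherian_of_multiplication {R M : Type*} [CommRing R] [AddCommGroup M] [Module R M]
    (hR : ∃ r : R, IsNilpotent r ∧
      ∀ I : ℕ → Ideal R, Monotone I →
        ∃ t : ℕ, ∀ i : ℕ, I (t + i) ≤ I t ⊔ Ideal.span {r})
    (hmul : ∀ N : Submodule R M, N = Submodule.colon N ⊤ • (⊤ : Submodule R M)) :
    ∃ r : R, (∃ n : ℕ, 0 < n ∧ ∀ m : M, r ^ n • m = 0) ∧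
      ∀ N : ℕ → Submodule R M, Monotone N →
        ∃ t : ℕ, ∀ i : ℕ, N (t + i) ≤ N t ⊔ r • (⊤ : Submodule R M) := by
  obtain ⟨r, ⟨n, hn⟩, hchain⟩ := hR
  refine ⟨r, ⟨n + 1, Nat.succ_pos n, fun m => ?_⟩, fun N hN => ?_⟩
  · have : r ^ (n + 1) = 0 := by
      rw [pow_succ']
      rw [hn]
      ring
    rw [this, zero_smul]
  · set I : ℕ → Ideal R := fun i => Submodule.colon (N i) ⊤ with hI
    have hImono : Monotone I := fun a b hab x hx => by
      rw [Submodule.mem_colon] at hx ⊢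
      exact fun p hp => hN hab (hx p hp)
    obtain ⟨t, ht⟩ := hchain I hImono
    refine ⟨t, fun i => ?_⟩
    calc N (t + i) = I (t + i) • ⊤ := hmul _
      _ ≤ (I t ⊔ Ideal.span {r}) • ⊤ := Submodule.smul_mono_left (ht i)
      _ = I t • ⊤ ⊔ Ideal.span {r} • (⊤ : Submodule R M) := Submodule.sup_smul _ _ _
      _ = N t ⊔ r • ⊤ := by
          rw [← hmul, Submodule.ideal_span_singleton_smul]
end

section
/- Let R be a commutative ring with identity, M a nil-M-Noetherian R-module, and f an R-module endomorphism of M. Then there exist r ∈ √Ann_R(M) and a positive integer n such that Im(f^n) ∩ Ker(f^n) ⊆ rM; consequently, if f is surjective, then f is nil-monic, i.e., Ker(f) ⊆ rM for some r ∈ √Ann_R(M). -/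
open Pointwise

/-- If `M` is nil-`M`-Noetherian and `f` is an endomorphism of `M`, then
`Im(f^n) ∩ Ker(f^n) ⊆ rM` for some `r ∈ √Ann M` and some positive `n`; consequently if `f`
is surjective then `f` is nil-monic. -/
theorem nil_noetherian_endomorphism {R M : Type*} [CommRing R] [AddCommGroup M] [Module R M]
    (h : ∃ r : R, (∃ n : ℕ, 0 < n ∧ ∀ m : M, r ^ n • m = 0) ∧
      ∀ N : ℕ → Submodule R M, Monotone N →
        ∃ t : ℕ, ∀ i : ℕ, N (t + i) ≤ N t ⊔ r • (⊤ : Submodule R M))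
    (f : M →ₗ[R] M) :
    (∃ r : R, (∃ n : ℕ, 0 < n ∧ ∀ m : M, r ^ n • m = 0) ∧
      ∃ n : ℕ, 0 < n ∧
        LinearMap.range (f ^ n) ⊓ LinearMap.ker (f ^ n) ≤ r • (⊤ : Submodule R M)) ∧
    (Function.Surjective f →
      ∃ r : R, (∃ n : ℕ, 0 < n ∧ ∀ m : M, r ^ n • m = 0) ∧
        LinearMap.ker f ≤ r • (⊤ : Submodule R M)) := by
  obtain ⟨r, hr, hchain⟩ := h
  have hmono : Monotone (fun i => LinearMap.ker (f ^ i)) := by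
    intro i j hij
    obtain ⟨k, rfl⟩ := Nat.exists_eq_add_of_le hij
    intro x hx
    simp only [LinearMap.mem_ker] at hx ⊢
    rw [add_comm i k, pow_add, Module.End.mul_apply, hx, map_zero]
  obtain ⟨t, ht⟩ := hchain (fun i => LinearMap.ker (f ^ i)) hmono
  have key : LinearMap.range (f ^ (t + 1)) ⊓ LinearMap.ker (f ^ (t + 1)) ≤
      r • (⊤ : Submodule R M) := by
    rintro x ⟨⟨y, rfl⟩, hxk⟩
    have hy : y ∈ LinearMap.ker (f ^ (t + (t + 2))) := by
      simp only [LinearMap.mem_ker] at hxk ⊢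
      have : t + (t + 2) = (t + 1) + (t + 1) := by ring
      rw [this, pow_add, Module.End.mul_apply, hxk]
    have hy2 := ht (t + 2) hy
    obtain ⟨k, hk, z, hz, rfl⟩ := Submodule.mem_sup.mp hy2
    obtain ⟨m, -, rfl⟩ := Set.mem_smul_set.mp hz
    have hk1 : (f ^ (t + 1)) k = 0 := by
      have hk0 : (f ^ t) k = 0 := hk
      rw [pow_succ', Module.End.mul_apply, hk0, map_zero]
    rw [map_add, hk1, zero_add, map_smul]
    exact Submodule.smul_mem_pointwise_smul _ _ _ Submodule.mem_top
  refine ⟨⟨r, hr, t + 1, Nat.succ_pos t, key⟩, fun hsurj => ⟨r, hr, fun x hx => ?_⟩⟩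
  have h1 : x ∈ LinearMap.range (f ^ (t + 1)) := by
    obtain ⟨z, hz⟩ := (hsurj.iterate (t + 1)) x
    exact ⟨z, by rw [Module.End.pow_apply]; exact hz⟩
  have h2 : x ∈ LinearMap.ker (f ^ (t + 1)) := by
    have hx0 : f x = 0 := hx
    rw [LinearMap.mem_ker, pow_succ, Module.End.mul_apply, hx0, map_zero]
  exact key (Submodule.mem_inf.mpr ⟨h1, h2⟩)
end
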